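/- arXiv:1502.01653 — 3 statements merged into one kernel-verified Lean document; each statement's English description precedes it below -/
import Mathlib

section
/- The sum rate function R(Q) = log det(I + Σ_k H_k Q_k H_k†) is an exact potential for the game with individual payoffs R_k(Q) = log det(W_{-k} + H_k Q_k H_k†) − log det(W_{-k}), where W_{-k} = I + Σ_{ℓ≠k} H_ℓ Q_ℓ H_ℓ†: for every user k and feasible Q_k, Q_k', R_k(Q_k; Q_{-k}) − R_k(Q_k'; Q_{-k}) = R(Q_k; Q_{-k}) − R(Q_k'; Q_{-k}). -/
open Matrix
open scoped ComplexOrder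

/-- The sum rate `R(Q) = log det(I + Σ_k H_k Q_k H_k†)`. -/
noncomputable def sumRate {N K : ℕ} {Md : Fin K → ℕ}
    (H : ∀ k, Matrix (Fin N) (Fin (Md k)) ℂ)
    (Q : ∀ k, Matrix (Fin (Md k)) (Fin (Md k)) ℂ) : ℝ :=
  Real.log ((1 + ∑ k, H k * Q k * (H k)ᴴ).det.re)

/-- The multi-user interference-plus-noise covariance `W_{-k} = I + Σ_{ℓ≠k} H_ℓ Q_ℓ H_ℓ†`. -/
noncomputable def mui {N K : ℕ} {Md : Fin K → ℕ}
    (H : ∀ k, Matrix (Fin N) (Fin (Md k)) ℂ)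
    (Q : ∀ k, Matrix (Fin (Md k)) (Fin (Md k)) ℂ) (k : Fin K) : Matrix (Fin N) (Fin N) ℂ :=
  1 + ∑ l ∈ Finset.univ.erase k, H l * Q l * (H l)ᴴ

/-- The individual rate `R_k(Q) = log det(W_{-k} + H_k Q_k H_k†) − log det(W_{-k})`. -/
noncomputable def indRate {N K : ℕ} {Md : Fin K → ℕ}
    (H : ∀ k, Matrix (Fin N) (Fin (Md k)) ℂ)
    (Q : ∀ k, Matrix (Fin (Md k)) (Fin (Md k)) ℂ) (k : Fin K) : ℝ :=
  Real.log ((mui H Q k + H k * Q k * (H k)ᴴ).det.re) - Real.log ((mui H Q k).det.re)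

lemma mui_update {N K : ℕ} {Md : Fin K → ℕ}
    (H : ∀ k, Matrix (Fin N) (Fin (Md k)) ℂ)
    (Q : ∀ k, Matrix (Fin (Md k)) (Fin (Md k)) ℂ) (k : Fin K)
    (X : Matrix (Fin (Md k)) (Fin (Md k)) ℂ) :
    mui H (Function.update Q k X) k = mui H Q k := by
  unfold mui
  congr 1
  refine Finset.sum_congr rfl fun l hl => ?_
  rw [Function.update_of_ne (Finset.ne_of_mem_erase hl)]

lemma mui_add {N K : ℕ} {Md : Fin K → ℕ}
    (H : ∀ k, Matrix (Fin N) (Fin (Md k)) ℂ)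
    (Q : ∀ k, Matrix (Fin (Md k)) (Fin (Md k)) ℂ) (k : Fin K)
    (X : Matrix (Fin (Md k)) (Fin (Md k)) ℂ) :
    mui H (Function.update Q k X) k + H k * X * (H k)ᴴ
      = 1 + ∑ l, H l * (Function.update Q k X l) * (H l)ᴴ := by
  rw [mui, add_assoc]
  congr 1
  have : H k * X * (H k)ᴴ
      = H k * (Function.update Q k X k) * (H k)ᴴ := by
    rw [Function.update_self]
  rw [this]
  have := Finset.sum_erase_add Finset.univ
    (fun l => H l * (Function.update Q k X l) * (H l)ᴴ) (Finset.mem_univ k)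
  rw [← this]

/-- The sum rate is an exact potential for the game with individual payoffs `R_k`. -/
theorem sumRate_is_exact_potential {N K : ℕ} {Md : Fin K → ℕ}
    (H : ∀ k, Matrix (Fin N) (Fin (Md k)) ℂ)
    (P : Fin K → ℝ) (hP : ∀ k, 0 < P k)
    (Q : ∀ k, Matrix (Fin (Md k)) (Fin (Md k)) ℂ)
    (hQ : ∀ k, (Q k).PosSemidef ∧ (Q k).trace = (P k : ℂ))
    (k : Fin K) (Qk Qk' : Matrix (Fin (Md k)) (Fin (Md k)) ℂ)
    (hQk : Qk.PosSemidef ∧ Qk.trace = (P k : ℂ))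
    (hQk' : Qk'.PosSemidef ∧ Qk'.trace = (P k : ℂ)) :
    indRate H (Function.update Q k Qk) k - indRate H (Function.update Q k Qk') k
      = sumRate H (Function.update Q k Qk) - sumRate H (Function.update Q k Qk') := by
  have h1 : indRate H (Function.update Q k Qk) k
      = sumRate H (Function.update Q k Qk) - Real.log ((mui H Q k).det.re) := by
    rw [indRate, sumRate, Function.update_self, mui_add, mui_update]
  have h2 : indRate H (Function.update Q k Qk') k
      = sumRate H (Function.update Q k Qk') - Real.log ((mui H Q k).det.re) := by
    rw [indRate, sumRate, Function.update_self, mui_add, mui_update]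
  rw [h1, h2]; ring
end

section
/- A Nash equilibrium exists and coincides with the maximizers of the sum rate: a feasible profile Q* satisfies R_k(Q*) ≥ R_k(Q_k; Q*_{-k}) for all feasible Q_k and all k if and only if Q* maximizes R(Q) = log det(I + Σ_k H_k Q_k H_k†) over Π_k X_k. -/
open Matrix
open scoped ComplexOrder

/-- Feasibility of a transmit profile: each `Q_k` is positive semidefinite with trace `P_k`. -/
def Feasible {K : ℕ} {Md : Fin K → ℕ} (P : Fin K → ℝ)
    (Q : ∀ k, Matrix (Fin (Md k)) (Fin (Md k)) ℂ) : Prop :=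
  ∀ k, (Q k).PosSemidef ∧ (Q k).trace = (P k : ℂ)

/-- `Q` is a Nash equilibrium: no user can unilaterally improve his individual rate. -/
def IsNash {N K : ℕ} {Md : Fin K → ℕ}
    (H : ∀ k, Matrix (Fin N) (Fin (Md k)) ℂ) (P : Fin K → ℝ)
    (Q : ∀ k, Matrix (Fin (Md k)) (Fin (Md k)) ℂ) : Prop :=
  ∀ k, ∀ Qk : Matrix (Fin (Md k)) (Fin (Md k)) ℂ,
    Qk.PosSemidef → Qk.trace = (P k : ℂ) →
      indRate H (Function.update Q k Qk) k ≤ indRate H Q k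

/-!
The sum rate `R = log det (I + Σ_k H_k Q_k H_k†)` is an exact potential of the game: a
unilateral deviation of user `k` changes `R_k` and `R` by the same amount, because `W_{-k}` does
not depend on `Q_k`. Hence a maximizer of `R` over the compact feasible set is a Nash equilibrium.
Conversely, at a Nash equilibrium `Q` no user can increase `R` along the segment towards `Q'_k`,
so each partial derivative `re tr (W⁻¹ H_k (Q'_k - Q_k) H_k†)`, `W = I + Σ_k H_k Q_k H_k†`, is
nonpositive. Summing over `k` and using the concavity bound
`log det B ≤ log det A + re tr (A⁻¹ (B - A))` gives `R(Q') ≤ R(Q)`.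
-/

namespace Matrix

variable {n : Type*}

lemma PosSemidef.add_smul_sub {A B : Matrix n n ℂ} (hA : A.PosSemidef) (hB : B.PosSemidef)
    {t : ℝ} (ht : t ∈ Set.Icc (0 : ℝ) 1) : (A + t • (B - A)).PosSemidef := by
  have hcomb : A + t • (B - A) = (1 - t) • A + t • B := by module
  exact hcomb ▸ (hA.smul (sub_nonneg.mpr ht.2)).add (hB.smul ht.1)

section LogDet

variable [Fintype n] [DecidableEq n]

lemma PosDef.det_eq_ofReal_re {A : Matrix n n ℂ} (hA : A.PosDef) : A.det = (A.det.re : ℂ) :=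
  Complex.ext rfl (by simpa using (Complex.lt_def.mp hA.det_pos).2.symm)

lemma PosDef.re_det_pos {A : Matrix n n ℂ} (hA : A.PosDef) : 0 < A.det.re :=
  (Complex.lt_def.mp hA.det_pos).1

lemma PosDef.log_re_det_le {C : Matrix n n ℂ} (hC : C.PosDef) :
    Real.log C.det.re ≤ C.trace.re - Fintype.card n := by
  have hμ := hC.eigenvalues_pos
  have hdet : C.det.re = ∏ i, hC.1.eigenvalues i := by
    rw [hC.1.det_eq_prod_eigenvalues]; simp [← Complex.ofReal_prod]
  have htr : C.trace.re = ∑ i, hC.1.eigenvalues i := by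
    rw [hC.1.trace_eq_sum_eigenvalues]; simp
  rw [hdet, htr, Real.log_prod fun i _ => (hμ i).ne', Finset.card_univ.symm,
    Finset.card_eq_sum_ones, Nat.cast_sum, Nat.cast_one, ← Finset.sum_sub_distrib]
  exact Finset.sum_le_sum fun i _ => Real.log_le_sub_one_of_pos (hμ i)

/-- Conjugating by `A^{-1/2}` reduces this to `log det C ≤ tr C - n`, i.e. to `log x ≤ x - 1` on
the eigenvalues of `C = A^{-1/2} B A^{-1/2}`. -/
lemma PosDef.log_re_det_le_add {A B : Matrix n n ℂ} (hA : A.PosDef) (hB : B.PosDef) :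
    Real.log B.det.re ≤ Real.log A.det.re + (A⁻¹ * (B - A)).trace.re := by
  open scoped MatrixOrder in
  set Z := CFC.sqrt A⁻¹
  have hZZ : Z * Z = A⁻¹ := CFC.sqrt_mul_sqrt_self _ hA.inv.posSemidef.nonneg
  have hZH : Zᴴ = Z := (CFC.sqrt_nonneg _).posSemidef.1.eq
  have hZ : IsUnit Z := isUnit_of_mul_isUnit_left (hZZ ▸ hA.inv.isUnit)
  have hC : (Zᴴ * B * Z).PosDef :=
    hB.conjTranspose_mul_mul_same (mulVec_injective_iff_isUnit.mpr hZ)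
  have htr : (Zᴴ * B * Z).trace = (A⁻¹ * B).trace := by rw [hZH, trace_mul_cycle, hZZ]
  have hdet : (Zᴴ * B * Z).det.re = B.det.re / A.det.re := by
    rw [hZH, det_mul, det_mul, mul_right_comm, ← det_mul, hZZ, det_nonsing_inv,
      Ring.inverse_eq_inv', hA.det_eq_ofReal_re, hB.det_eq_ofReal_re, ← Complex.ofReal_inv,
      ← Complex.ofReal_mul]
    simp only [Complex.ofReal_re, inv_mul_eq_div]
  have hsub : (A⁻¹ * (B - A)).trace = (A⁻¹ * B).trace - Fintype.card n := by
    rw [mul_sub, nonsing_inv_mul _ (isUnit_iff_ne_zero.mpr hA.det_pos.ne'), trace_sub, trace_one]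
  have := hC.log_re_det_le
  rw [hdet, Real.log_div hB.re_det_pos.ne' hA.re_det_pos.ne', htr] at this
  rw [hsub, Complex.sub_re, Complex.natCast_re]
  linarith

/-- `re tr (A⁻¹ B)` is the derivative of `log det` at `A` in the direction `B`: the concavity
bound at `A + t • B` gives `t * re tr ((A + t • B)⁻¹ B) ≤ 0`, and one lets `t → 0⁺`. -/
lemma PosDef.re_trace_inv_mul_nonpos {A B : Matrix n n ℂ} (hA : A.PosDef)
    (h : ∀ t ∈ Set.Ioc (0 : ℝ) 1,
      (A + t • B).PosDef ∧ Real.log (A + t • B).det.re ≤ Real.log A.det.re) :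
    (A⁻¹ * B).trace.re ≤ 0 := by
  have hinv : ContinuousAt Inv.inv A :=
    continuousAt_matrix_inv A (Ring.inverse_eq_inv' (G₀ := ℂ) ▸ continuousAt_inv₀ hA.det_pos.ne')
  have hcont : ContinuousAt (fun t : ℝ => ((A + t • B)⁻¹ * B).trace.re) 0 := by
    have : ContinuousAt (fun t : ℝ => (A + t • B)⁻¹) 0 :=
      ContinuousAt.comp (g := Inv.inv) (by simpa using hinv) (by fun_prop)
    fun_prop
  have hslope : ∀ t ∈ Set.Ioc (0 : ℝ) 1, ((A + t • B)⁻¹ * B).trace.re ≤ 0 := by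
    intro t ht
    obtain ⟨hAt, hle⟩ := h t ht
    have htan := hAt.log_re_det_le_add hA
    rw [sub_add_cancel_left, mul_neg, mul_smul_comm, trace_neg, trace_smul, Complex.neg_re,
      Complex.smul_re, smul_eq_mul] at htan
    exact nonpos_of_mul_nonpos_right (by linarith) ht.1
  have hlim := hcont.tendsto.mono_left (nhdsWithin_le_nhds (s := Set.Ioi 0))
  simp only [zero_smul, add_zero] at hlim
  exact le_of_tendsto hlim (Filter.mem_of_superset (Ioc_mem_nhdsGT one_pos) hslope)

end LogDet

section Frobenius

variable [Fintype n]

attribute [local instance] frobeniusNormedAddCommGroup frobeniusNormedSpace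

lemma trace_conjTranspose_mul_self_eq_norm_sq {m : Type*} [Fintype m] (B : Matrix m n ℂ) :
    (Bᴴ * B).trace = ((‖B‖ ^ 2 : ℝ) : ℂ) := by
  rw [frobenius_norm_def, ← Real.rpow_natCast, ← Real.rpow_mul (by positivity)]
  simp [trace, mul_apply, Complex.conj_mul', Finset.sum_comm (γ := n)]

lemma isCompact_setOf_posSemidef_trace_eq [DecidableEq n] (p : ℝ) :
    IsCompact {M : Matrix n n ℂ | M.PosSemidef ∧ M.trace = p} := by
  open scoped MatrixOrder in
  have himage : {M : Matrix n n ℂ | M.PosSemidef ∧ M.trace = p} =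
      (fun B => Bᴴ * B) '' {B | ‖B‖ ^ 2 = p} := by
    ext M
    simp only [Set.mem_ofPred_eq, Set.mem_image]
    constructor
    · rintro ⟨hM, htr⟩
      obtain ⟨B, rfl⟩ := CStarAlgebra.nonneg_iff_eq_star_mul_self.mp hM.nonneg
      exact ⟨B, by exact_mod_cast (trace_conjTranspose_mul_self_eq_norm_sq B).symm.trans htr, rfl⟩
    · rintro ⟨B, hB, rfl⟩
      exact ⟨posSemidef_conjTranspose_mul_self B,
        by rw [trace_conjTranspose_mul_self_eq_norm_sq, hB]⟩
  have hsphere : IsCompact {B : Matrix n n ℂ | ‖B‖ ^ 2 = p} :=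
    (ProperSpace.isCompact_closedBall 0 √p).of_isClosed_subset
      (isClosed_eq (by fun_prop) continuous_const)
      fun B hB => mem_closedBall_zero_iff.mpr ((le_abs_self _).trans (Real.abs_le_sqrt hB.le))
  exact himage ▸ hsphere.image (by fun_prop)

end Frobenius

end Matrix

section Game

variable {N K : ℕ} {Md : Fin K → ℕ} (H : ∀ k, Matrix (Fin N) (Fin (Md k)) ℂ)

/-- Covariance of the received signal plus noise. -/
def rxCov (Q : ∀ k, Matrix (Fin (Md k)) (Fin (Md k)) ℂ) : Matrix (Fin N) (Fin N) ℂ :=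
  1 + ∑ k, H k * Q k * (H k)ᴴ

lemma sumRate_eq_log_rxCov (Q : ∀ k, Matrix (Fin (Md k)) (Fin (Md k)) ℂ) :
    sumRate H Q = Real.log (rxCov H Q).det.re := rfl

lemma rxCov_posDef {Q : ∀ k, Matrix (Fin (Md k)) (Fin (Md k)) ℂ}
    (hQ : ∀ k, (Q k).PosSemidef) : (rxCov H Q).PosDef :=
  PosDef.one.add_posSemidef <| posSemidef_sum _ fun k _ => (hQ k).mul_mul_conjTranspose_same (H k)

lemma rxCov_eq_mui_add (Q : ∀ k, Matrix (Fin (Md k)) (Fin (Md k)) ℂ) (k : Fin K) :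
    rxCov H Q = mui H Q k + H k * Q k * (H k)ᴴ := by
  rw [rxCov, mui, add_assoc, Finset.sum_erase_add _ _ (Finset.mem_univ k)]

lemma rxCov_sub_rxCov (Q Q' : ∀ k, Matrix (Fin (Md k)) (Fin (Md k)) ℂ) :
    rxCov H Q' - rxCov H Q = ∑ k, H k * (Q' k - Q k) * (H k)ᴴ := by
  simp only [rxCov, add_sub_add_left_eq_sub, ← Finset.sum_sub_distrib, Matrix.mul_sub,
    Matrix.sub_mul]

lemma mui_update_self (Q : ∀ k, Matrix (Fin (Md k)) (Fin (Md k)) ℂ) (k : Fin K)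
    (Qk : Matrix (Fin (Md k)) (Fin (Md k)) ℂ) :
    mui H (Function.update Q k Qk) k = mui H Q k := by
  refine congrArg (1 + ·) (Finset.sum_congr rfl fun l hl => ?_)
  rw [Function.update_of_ne (Finset.ne_of_mem_erase hl)]

lemma rxCov_update_add_smul (Q Q' : ∀ k, Matrix (Fin (Md k)) (Fin (Md k)) ℂ) (k : Fin K)
    (t : ℝ) :
    rxCov H (Function.update Q k (Q k + t • (Q' k - Q k))) =
      rxCov H Q + t • (H k * (Q' k - Q k) * (H k)ᴴ) := by
  rw [rxCov_eq_mui_add _ _ k, rxCov_eq_mui_add _ Q k, mui_update_self, Function.update_self,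
    Matrix.mul_add, Matrix.add_mul, Matrix.mul_smul, Matrix.smul_mul, add_assoc]

/-- The sum rate is an exact potential of the game. -/
lemma indRate_update_sub_indRate (Q : ∀ k, Matrix (Fin (Md k)) (Fin (Md k)) ℂ) (k : Fin K)
    (Qk : Matrix (Fin (Md k)) (Fin (Md k)) ℂ) :
    indRate H (Function.update Q k Qk) k - indRate H Q k =
      sumRate H (Function.update Q k Qk) - sumRate H Q := by
  simp only [indRate, sumRate_eq_log_rxCov, rxCov_eq_mui_add H _ k, mui_update_self]
  ring

lemma isNash_iff_forall_sumRate_update_le (P : Fin K → ℝ)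
    (Q : ∀ k, Matrix (Fin (Md k)) (Fin (Md k)) ℂ) :
    IsNash H P Q ↔ ∀ k, ∀ Qk : Matrix (Fin (Md k)) (Fin (Md k)) ℂ,
      Qk.PosSemidef → Qk.trace = (P k : ℂ) →
        sumRate H (Function.update Q k Qk) ≤ sumRate H Q := by
  refine forall_congr' fun k => forall_congr' fun Qk => imp_congr_right fun _ =>
    imp_congr_right fun _ => ?_
  rw [← sub_nonpos, indRate_update_sub_indRate, sub_nonpos]

lemma Feasible.update {P : Fin K → ℝ} {Q : ∀ k, Matrix (Fin (Md k)) (Fin (Md k)) ℂ}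
    (hQ : Feasible P Q) {k : Fin K} {Qk : Matrix (Fin (Md k)) (Fin (Md k)) ℂ}
    (hQk : Qk.PosSemidef) (htr : Qk.trace = (P k : ℂ)) :
    Feasible P (Function.update Q k Qk) := by
  intro l
  rcases eq_or_ne l k with rfl | hl
  · simpa using ⟨hQk, htr⟩
  · simpa [hl] using hQ l

omit H in
lemma feasible_smul_one {P : Fin K → ℝ} (hP : ∀ k, 0 ≤ P k) (hMd : ∀ k, 0 < Md k) :
    Feasible P fun k => (P k / Md k) • (1 : Matrix (Fin (Md k)) (Fin (Md k)) ℂ) := by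
  refine fun k => ⟨PosSemidef.one.smul (div_nonneg (hP k) (Nat.cast_nonneg _)), ?_⟩
  rw [trace_smul, trace_one, Fintype.card_fin, Complex.real_smul]
  push_cast
  exact div_mul_cancel₀ _ (Nat.cast_ne_zero.mpr (hMd k).ne')

omit H in
lemma isCompact_setOf_feasible (P : Fin K → ℝ) :
    IsCompact {Q : ∀ k, Matrix (Fin (Md k)) (Fin (Md k)) ℂ | Feasible P Q} := by
  have hpi : {Q : ∀ k, Matrix (Fin (Md k)) (Fin (Md k)) ℂ | Feasible P Q} =
      Set.univ.pi fun k => {M | M.PosSemidef ∧ M.trace = (P k : ℂ)} := by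
    ext Q
    simp [Feasible]
  exact hpi ▸ isCompact_univ_pi fun k => isCompact_setOf_posSemidef_trace_eq _

lemma continuousOn_sumRate (P : Fin K → ℝ) :
    ContinuousOn (sumRate H) {Q | Feasible P Q} := fun Q hQ =>
  (Real.continuousAt_log (rxCov_posDef H fun k => (hQ k).1).re_det_pos.ne').comp_continuousWithinAt
    (f := fun Q => (rxCov H Q).det.re) (by unfold rxCov; fun_prop : Continuous _).continuousWithinAt

lemma sumRate_le_of_isNash {P : Fin K → ℝ} {Q Q' : ∀ k, Matrix (Fin (Md k)) (Fin (Md k)) ℂ}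
    (hQ : Feasible P Q) (hQ' : Feasible P Q') (hN : IsNash H P Q) :
    sumRate H Q' ≤ sumRate H Q := by
  set A := rxCov H Q
  have hA : A.PosDef := rxCov_posDef H fun k => (hQ k).1
  -- each user's best-response condition makes the partial derivative of `log det` nonpositive
  have hdir (k : Fin K) : (A⁻¹ * (H k * (Q' k - Q k) * (H k)ᴴ)).trace.re ≤ 0 := by
    refine hA.re_trace_inv_mul_nonpos fun t ht => ?_
    have htr : (Q k + t • (Q' k - Q k)).trace = P k := by
      rw [trace_add, trace_smul, trace_sub, (hQ k).2, (hQ' k).2, sub_self, smul_zero, add_zero]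
    have hpsd := (hQ k).1.add_smul_sub (hQ' k).1 ⟨ht.1.le, ht.2⟩
    rw [← rxCov_update_add_smul]
    exact ⟨rxCov_posDef H fun l => ((hQ.update hpsd htr) l).1,
      (isNash_iff_forall_sumRate_update_le H P Q).mp hN k _ hpsd htr⟩
  calc sumRate H Q' ≤ sumRate H Q + (A⁻¹ * (rxCov H Q' - A)).trace.re :=
        hA.log_re_det_le_add (rxCov_posDef H fun k => (hQ' k).1)
    _ ≤ sumRate H Q := by
        rw [rxCov_sub_rxCov, Matrix.mul_sum, trace_sum, Complex.re_sum]
        linarith [Finset.sum_nonpos fun k (_ : k ∈ Finset.univ) => hdir k]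

lemma isNash_iff_forall_sumRate_le (P : Fin K → ℝ)
    {Q : ∀ k, Matrix (Fin (Md k)) (Fin (Md k)) ℂ} (hQ : Feasible P Q) :
    IsNash H P Q ↔ ∀ Q', Feasible P Q' → sumRate H Q' ≤ sumRate H Q :=
  ⟨fun hN _ hQ' => sumRate_le_of_isNash H hQ hQ' hN, fun hmax =>
    (isNash_iff_forall_sumRate_update_le H P Q).mpr fun _ _ hQk htr => hmax _ (hQ.update hQk htr)⟩

end Game

/-- A Nash equilibrium exists, and the Nash equilibria coincide with the maximizers of the
sum rate over the product of the feasible sets. -/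
theorem nash_exists_and_iff_sumRate_max {N K : ℕ} {Md : Fin K → ℕ}
    (H : ∀ k, Matrix (Fin N) (Fin (Md k)) ℂ)
    (P : Fin K → ℝ) (hP : ∀ k, 0 < P k) (hMd : ∀ k, 0 < Md k) :
    (∃ Qs : ∀ k, Matrix (Fin (Md k)) (Fin (Md k)) ℂ, Feasible P Qs ∧ IsNash H P Qs) ∧
    (∀ Qs : ∀ k, Matrix (Fin (Md k)) (Fin (Md k)) ℂ, Feasible P Qs →
      (IsNash H P Qs ↔ ∀ Q', Feasible P Q' → sumRate H Q' ≤ sumRate H Qs)) := by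
  obtain ⟨Q, hQ, hmax⟩ := (isCompact_setOf_feasible P).exists_isMaxOn
    ⟨_, feasible_smul_one (fun k => (hP k).le) hMd⟩ (continuousOn_sumRate H P)
  exact ⟨⟨Q, hQ, (isNash_iff_forall_sumRate_le H P hQ).mpr fun _ hQ' => hmax hQ'⟩,
    fun _ hQs => isNash_iff_forall_sumRate_le H P hQs⟩
end

section
/- The gradient of the Fenchel coupling in its second argument satisfies ∇_Y F(Q, Y) = exp(Y)/tr(exp Y) − Q; i.e., for Hermitian Δ, the directional derivative of Y ↦ F(Q,Y) along Δ is tr[(exp(Y)/tr(exp Y) − Q) Δ]. -/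
open Matrix
open scoped ComplexOrder

/-- The negative von Neumann entropy `h(Q) = tr(Q log Q) = Σ_i q_i log q_i` (with `0 log 0 = 0`). -/
noncomputable def vnEntropy {M : ℕ} (A : Matrix (Fin M) (Fin M) ℂ) : ℝ :=
  if h : A.IsHermitian then ∑ i, h.eigenvalues i * Real.log (h.eigenvalues i) else 0

/-- The Gibbs state `exp(Y)/tr(exp Y)`. -/
noncomputable def gibbs {M : ℕ} (Y : Matrix (Fin M) (Fin M) ℂ) : Matrix (Fin M) (Fin M) ℂ :=
  ((NormedSpace.exp Y).trace)⁻¹ • NormedSpace.exp Y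

/-- The Fenchel coupling `F(Q,Y) = h(Q) + log tr(exp Y) − tr(QY)`. -/
noncomputable def fenchel {M : ℕ} (Q Y : Matrix (Fin M) (Fin M) ℂ) : ℝ :=
  vnEntropy Q + Real.log ((NormedSpace.exp Y).trace.re) - (Q * Y).trace.re

/-! Cyclicity of the trace makes `tr (Y ^ n)` differentiate like a commutative power,
`d tr (Y ^ n) [Δ] = n tr (Y ^ (n - 1) Δ)`, although `Y` and `Δ` need not commute; summing the
exponential series termwise gives `d tr (exp Y) [Δ] = tr (exp Y Δ)`. For Hermitian `Y`,
`exp Y = exp (Y/2)ᴴ exp (Y/2)` is positive definite, so `tr (exp Y)` is a positive real and the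
chain rule for `log` produces the Gibbs state. -/

open NormedSpace ContinuousLinearMap
open scoped Nat

theorem inv_factorial_succ_mul_succ {K : Type*} [Field K] [CharZero K] (m : ℕ) :
    ((m + 1)! : K)⁻¹ * (m + 1 : ℕ) = (m ! : K)⁻¹ := by
  rw [Nat.factorial_succ]
  push_cast
  field_simp

section Tracial

variable {𝕜 𝔸 E : Type*} [RCLike 𝕜] [NormedRing 𝔸] [NormedAlgebra 𝕜 𝔸]
  [NormedAddCommGroup E] [NormedSpace 𝕜 E]

theorem hasSum_inv_factorial_mul_pow_pred [CompleteSpace 𝔸] (x : 𝔸) :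
    HasSum (fun n => ((n ! : 𝕜)⁻¹ * n) • x ^ (n - 1)) (exp x) := by
  rw [← hasSum_nat_add_iff' 1]
  simpa only [inv_factorial_succ_mul_succ, Nat.add_sub_cancel, Finset.sum_range_one,
    CharP.cast_eq_zero, mul_zero, zero_smul, sub_zero] using exp_series_hasSum_exp' (𝕂 := 𝕜) x

theorem hasFDerivAt_tracial_pow (τ : 𝔸 →L[𝕜] E) (hτ : ∀ a b, τ (a * b) = τ (b * a))
    (n : ℕ) (x : 𝔸) :
    HasFDerivAt (fun y => τ (y ^ n)) ((n : 𝕜) • τ ∘L mul 𝕜 𝔸 (x ^ (n - 1))) x := by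
  refine (τ.hasFDerivAt.comp x (hasFDerivAt_pow' n)).congr_fderiv ?_
  ext h
  have cyclic :
      ∀ i ∈ Finset.range n, τ (x ^ (n - 1 - i) * h * x ^ i) = τ (x ^ (n - 1) * h) := by
    intro i hi
    rw [hτ, ← mul_assoc, ← pow_add, Nat.add_sub_of_le (by grind)]
  simp [Finset.sum_congr rfl cyclic, Nat.cast_smul_eq_nsmul]

theorem hasFDerivAt_tracial_exp [NormOneClass 𝔸] [CompleteSpace 𝔸] [CompleteSpace E]
    (τ : 𝔸 →L[𝕜] E) (hτ : ∀ a b, τ (a * b) = τ (b * a)) (x : 𝔸) :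
    HasFDerivAt (fun y => τ (exp y)) (τ ∘L mul 𝕜 𝔸 (exp x)) x := by
  set Φ : 𝔸 →L[𝕜] 𝔸 →L[𝕜] E := compL 𝕜 𝔸 𝔸 E τ ∘L mul 𝕜 𝔸
  set c : ℕ → 𝕜 := fun n => (n ! : 𝕜)⁻¹ * n
  set r := ‖x‖ + 1
  have hderiv (n : ℕ) (y : 𝔸) :
      HasFDerivAt (fun y => (n ! : 𝕜)⁻¹ • τ (y ^ n)) (Φ (c n • y ^ (n - 1))) y := by
    refine ((hasFDerivAt_tracial_pow τ hτ n y).const_smul (n ! : 𝕜)⁻¹).congr_fderiv ?_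
    ext h
    simp [Φ, c, mul_smul]
  have hbound (n : ℕ) (y : 𝔸) (hy : y ∈ Metric.ball 0 r) :
      ‖Φ (c n • y ^ (n - 1))‖ ≤ ‖Φ‖ * (r ^ (n - 1) / (n - 1)!) := by
    refine Φ.le_opNorm_of_le ?_
    rcases n with _ | m
    · simp [c]
    · rw [show c (m + 1) = (m ! : 𝕜)⁻¹ from inv_factorial_succ_mul_succ m, norm_smul,
        Nat.add_sub_cancel, div_eq_inv_mul, norm_inv, RCLike.norm_natCast]
      gcongr
      refine (norm_pow_le _ _).trans (pow_le_pow_left₀ (norm_nonneg _) ?_ _)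
      simpa using (mem_ball_zero_iff.1 hy).le
  have hsum_bound : Summable fun n : ℕ => ‖Φ‖ * (r ^ (n - 1) / (n - 1)!) := by
    rw [← summable_nat_add_iff 1]
    simpa using (Real.summable_pow_div_factorial r).mul_left ‖Φ‖
  have hexp_series (y : 𝔸) :
      HasSum (fun n => (n ! : 𝕜)⁻¹ • τ (y ^ n)) (τ (exp y)) := by
    simpa using (exp_series_hasSum_exp' (𝕂 := 𝕜) y).mapL τ
  have hderiv_series : HasSum (fun n => Φ (c n • x ^ (n - 1))) (τ ∘L mul 𝕜 𝔸 (exp x)) :=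
    (hasSum_inv_factorial_mul_pow_pred x).mapL Φ
  have hx : x ∈ Metric.ball (0 : 𝔸) r := by simp [r]
  let _ : NormedSpace ℝ 𝔸 := NormedSpace.restrictScalars ℝ 𝕜 𝔸
  rw [funext fun y => (hexp_series y).tsum_eq.symm, ← hderiv_series.tsum_eq]
  exact hasFDerivAt_tsum_of_isPreconnected hsum_bound Metric.isOpen_ball
    (convex_ball 0 r).isPreconnected (fun n y _ => hderiv n y) hbound hx
    (hexp_series x).summable hx

end Tracial

theorem Matrix.IsHermitian.posDef_exp {n 𝕜 : Type*} [Fintype n] [DecidableEq n] [RCLike 𝕜]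
    {A : Matrix n n 𝕜} (hA : A.IsHermitian) : (NormedSpace.exp A).PosDef := by
  set B := NormedSpace.exp ((2⁻¹ : 𝕜) • A)
  have hB : Bᴴ = B := by
    rw [← exp_conjTranspose, conjTranspose_smul, hA.eq, star_inv₀, star_ofNat]
  have hsq : NormedSpace.exp A = Bᴴ * B := by
    rw [hB, ← exp_add_of_commute _ _ (Commute.refl _), ← add_smul]
    norm_num
  rw [hsq]
  exact PosDef.conjTranspose_mul_self B (mulVec_injective_iff_isUnit.2 (isUnit_exp _))

section MatrixTrace

attribute [local instance] Matrix.linftyOpNormedAddCommGroup Matrix.linftyOpNormedRing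
  Matrix.linftyOpNormedAlgebra Matrix.linftyOpNormedSpace

variable {n : Type*} [Fintype n] [DecidableEq n]

theorem Matrix.hasDerivAt_re_trace_exp_add_smul [Nonempty n] (Y Δ : Matrix n n ℂ) :
    HasDerivAt (fun t : ℝ => (exp (Y + t • Δ)).trace.re) (exp Y * Δ).trace.re 0 := by
  have htrace_exp :=
    hasFDerivAt_tracial_exp (traceLinearMap n ℂ ℂ).toContinuousLinearMap trace_mul_comm Y
  exact (Complex.reCLM.hasFDerivAt.comp Y (htrace_exp.restrictScalars ℝ)).hasLineDerivAt Δ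

theorem Matrix.hasDerivAt_re_trace_mul_add_smul (Q Y Δ : Matrix n n ℂ) :
    HasDerivAt (fun t : ℝ => (Q * (Y + t • Δ)).trace.re) (Q * Δ).trace.re 0 :=
  (Complex.reCLM.comp (((traceLinearMap n ℂ ℂ).toContinuousLinearMap ∘L
    mul ℂ _ Q).restrictScalars ℝ)).hasFDerivAt.hasLineDerivAt Δ

end MatrixTrace

theorem fenchel_directional_deriv_general {M : ℕ}
    (Q Y Δ : Matrix (Fin M) (Fin M) ℂ)
    (hY : Y.IsHermitian) :
    HasDerivAt (fun t : ℝ => fenchel Q (Y + t • Δ))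
      (((gibbs Y - Q) * Δ).trace.re) 0 := by
  rcases isEmpty_or_nonempty (Fin M) with hM | hM
  · simpa [fenchel, Matrix.trace] using hasDerivAt_const (0 : ℝ) (vnEntropy Q)
  obtain ⟨hpos, him⟩ := Complex.pos_iff.1 hY.posDef_exp.trace_pos
  have hlog := (hasDerivAt_re_trace_exp_add_smul Y Δ).log (by simpa using hpos.ne')
  rw [zero_smul, add_zero] at hlog
  have hreal : (exp Y).trace = ((exp Y).trace.re : ℂ) := Complex.ext rfl him.symm
  have hvalue : (exp Y * Δ).trace.re / (exp Y).trace.re - (Q * Δ).trace.re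
      = ((gibbs Y - Q) * Δ).trace.re := by
    rw [gibbs, sub_mul, trace_sub, smul_mul, trace_smul, hreal, smul_eq_mul, ← Complex.ofReal_inv,
      Complex.sub_re, Complex.re_ofReal_mul, Complex.ofReal_re, div_eq_inv_mul]
  exact ((hlog.const_add (vnEntropy Q)).sub
    (hasDerivAt_re_trace_mul_add_smul Q Y Δ)).congr_deriv hvalue

/-- The gradient of the Fenchel coupling in its second argument is
`exp(Y)/tr(exp Y) − Q`: for every Hermitian direction `Δ`, the directional derivative of
`Y ↦ F(Q,Y)` along `Δ` is `tr[(exp(Y)/tr(exp Y) − Q)Δ]`. -/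
theorem fenchel_directional_deriv {M : ℕ}
    (Q Y Δ : Matrix (Fin M) (Fin M) ℂ)
    (hQ : Q.PosSemidef) (htr : Q.trace = 1) (hY : Y.IsHermitian) (hΔ : Δ.IsHermitian) :
    HasDerivAt (fun t : ℝ => fenchel Q (Y + t • Δ))
      (((gibbs Y - Q) * Δ).trace.re) 0 :=
  fenchel_directional_deriv_general Q Y Δ hY
end
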